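/- arXiv:1405.7480 — 4 statements merged into one kernel-verified Lean document; each statement's English description precedes it below -/
import Mathlib

section
/- Let f : I → ℝ be three times differentiable on the interior of the interval I, let a, b be in the interior with a < b, and suppose f''' is integrable on [a,b]. Then (1/(b-a))·∫_a^b f(x) dx − f((a+b)/2) − ((b-a)²/24)·f''((a+b)/2) = ((b-a)³/96)·[∫_0^1 t³ f'''((t/2)a + ((2−t)/2)b) dt − ∫_0^1 t³ f'''(((2−t)/2)a + (t/2)b) dt]. -/
/-!
Integrating the third-order Taylor expansion of `f` about the midpoint `m` (with integral
remainder) from `m` to `b` and from `m` to `a` and subtracting, the `f'(m)` terms cancel: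
`∫_a^b f = (b - a) f(m) + (b - a)³/24 f''(m) + (∫_m^b (b - s)³ f''' - ∫_m^a (a - s)³ f''') / 6`.
The affine substitutions `s = b + t (m - b)` and `s = a + t (m - a)` turn each remainder integral
into `(b - a)⁴/16` times one of the integrals over `[0, 1]` in the statement.
-/

open MeasureTheory intervalIntegral Set

theorem integral_sub_pow_mul_eq_integral_zero_one (φ : ℝ → ℝ) (n : ℕ) (m x : ℝ) :
    ∫ s in m..x, (x - s) ^ n * φ s
      = (x - m) ^ (n + 1) * ∫ t in 0..1, t ^ n * φ (x + t * (m - x)) := by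
  have h := smul_integral_comp_mul_add (a := 0) (b := 1) (fun s => (x - s) ^ n * φ s) (m - x) x
  simp only [mul_zero, zero_add, mul_one, sub_add_cancel, smul_eq_mul] at h
  rw [integral_symm, ← h, ← intervalIntegral.integral_const_mul,
    ← intervalIntegral.integral_const_mul, ← intervalIntegral.integral_neg]
  congr 1 with t
  rw [show x - ((m - x) * t + x) = t * (x - m) by ring, mul_pow, add_comm x, mul_comm (m - x) t,
    pow_succ]
  ring

section Taylor

variable {f f' f'' f''' : ℝ → ℝ}

theorem integral_eq_taylor_three_add_integral_remainder {m x : ℝ}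
    (hf : ∀ s ∈ uIcc m x, HasDerivAt f (f' s) s)
    (hf' : ∀ s ∈ uIcc m x, HasDerivAt f' (f'' s) s)
    (hf'' : ∀ s ∈ uIcc m x, HasDerivAt f'' (f''' s) s)
    (hint : IntervalIntegrable f''' volume m x) :
    ∫ s in m..x, f s = f m * (x - m) + f' m * (x - m) ^ 2 / 2 + f'' m * (x - m) ^ 3 / 6
      + (∫ s in m..x, (x - s) ^ 3 * f''' s) / 6 := by
  set g : ℝ → ℝ := fun s => f s * (x - s) + f' s * (x - s) ^ 2 / 2 + f'' s * (x - s) ^ 3 / 6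
  have hg : ∀ s ∈ uIcc m x, HasDerivAt g ((x - s) ^ 3 * f''' s / 6 - f s) s := by
    intro s hs
    have hx : HasDerivAt (fun y : ℝ => x - y) (-1) s := by
      simpa using (hasDerivAt_id s).const_sub x
    refine ((((hf s hs).mul hx).add (((hf' s hs).mul (hx.pow 2)).div_const 2)).add
      (((hf'' s hs).mul (hx.pow 3)).div_const 6)).congr_deriv ?_
    push_cast [Pi.pow_apply]
    ring
  have hfi : IntervalIntegrable f volume m x := (HasDerivAt.continuousOn hf).intervalIntegrable
  have hrem : IntervalIntegrable (fun s => (x - s) ^ 3 * f''' s / 6) volume m x :=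
    (hint.continuousOn_mul (by fun_prop)).div_const 6
  have hftc := integral_eq_sub_of_hasDerivAt hg (hrem.sub hfi)
  rw [integral_sub hrem hfi, intervalIntegral.integral_div] at hftc
  simp only [g, sub_self] at hftc
  linarith

theorem integral_eq_midpoint_taylor_add_integral_remainder {a b : ℝ}
    (hf : ∀ s ∈ uIcc a b, HasDerivAt f (f' s) s)
    (hf' : ∀ s ∈ uIcc a b, HasDerivAt f' (f'' s) s)
    (hf'' : ∀ s ∈ uIcc a b, HasDerivAt f'' (f''' s) s)
    (hint : IntervalIntegrable f''' volume a b) :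
    ∫ x in a..b, f x = (b - a) * f ((a + b) / 2) + (b - a) ^ 3 / 24 * f'' ((a + b) / 2)
      + ((∫ s in (a + b) / 2..b, (b - s) ^ 3 * f''' s)
          - ∫ s in (a + b) / 2..a, (a - s) ^ 3 * f''' s) / 6 := by
  set m := (a + b) / 2 with hm
  have hm_mem : m ∈ uIcc a b := by
    rw [mem_uIcc]
    rcases le_total a b with h | h
    · exact Or.inl ⟨by linarith, by linarith⟩
    · exact Or.inr ⟨by linarith, by linarith⟩
  have hsub {x : ℝ} (hx : x ∈ uIcc a b) : uIcc m x ⊆ uIcc a b := uIcc_subset_uIcc hm_mem hx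
  have taylor {x : ℝ} (hx : x ∈ uIcc a b) := integral_eq_taylor_three_add_integral_remainder
    (fun s hs => hf s (hsub hx hs)) (fun s hs => hf' s (hsub hx hs))
    (fun s hs => hf'' s (hsub hx hs)) (hint.mono_set (hsub hx))
  have hfi {x : ℝ} (hx : x ∈ uIcc a b) : IntervalIntegrable f volume m x :=
    (HasDerivAt.continuousOn fun s hs => hf s (hsub hx hs)).intervalIntegrable
  rw [← integral_interval_sub_left (hfi right_mem_uIcc) (hfi left_mem_uIcc),
    taylor left_mem_uIcc, taylor right_mem_uIcc, hm]
  ring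

end Taylor

theorem lemma_midpoint_identity
    (I : Set ℝ) (hI : I.OrdConnected)
    (f f' f'' f''' : ℝ → ℝ)
    (a b : ℝ) (ha : a ∈ interior I) (hb : b ∈ interior I) (hab : a < b)
    (hf' : ∀ x ∈ interior I, HasDerivAt f (f' x) x)
    (hf'' : ∀ x ∈ interior I, HasDerivAt f' (f'' x) x)
    (hf''' : ∀ x ∈ interior I, HasDerivAt f'' (f''' x) x)
    (hint : IntegrableOn f''' (Set.Icc a b)) :
    (1 / (b - a)) * ∫ x in a..b, f x - f ((a + b) / 2)
      - ((b - a) ^ 2 / 24) * f'' ((a + b) / 2)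
    = ((b - a) ^ 3 / 96) *
        ((∫ t in (0:ℝ)..1, t ^ 3 * f''' ((t / 2) * a + ((2 - t) / 2) * b))
          - ∫ t in (0:ℝ)..1, t ^ 3 * f''' (((2 - t) / 2) * a + (t / 2) * b)) := by
  have hsub : uIcc a b ⊆ interior I := by
    rw [uIcc_of_le hab.le]
    exact hI.interior.out ha hb
  have hfi : IntervalIntegrable f volume a b :=
    (HasDerivAt.continuousOn fun s hs => hf' s (hsub hs)).intervalIntegrable
  have hmid := integral_eq_midpoint_taylor_add_integral_remainder
    (fun s hs => hf' s (hsub hs)) (fun s hs => hf'' s (hsub hs)) (fun s hs => hf''' s (hsub hs))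
    ((intervalIntegrable_iff_integrableOn_Icc_of_le hab.le).2 hint)
  rw [integral_sub_pow_mul_eq_integral_zero_one, integral_sub_pow_mul_eq_integral_zero_one] at hmid
  have hb_arg (t : ℝ) : t / 2 * a + (2 - t) / 2 * b = b + t * ((a + b) / 2 - b) := by ring
  have ha_arg (t : ℝ) : (2 - t) / 2 * a + t / 2 * b = a + t * ((a + b) / 2 - a) := by ring
  simp_rw [hb_arg, ha_arg]
  generalize (∫ t in (0:ℝ)..1, t ^ 3 * f''' (b + t * ((a + b) / 2 - b))) = Jb at hmid ⊢
  generalize (∫ t in (0:ℝ)..1, t ^ 3 * f''' (a + t * ((a + b) / 2 - a))) = Ja at hmid ⊢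
  -- The integral on the left binds the whole difference `f x - f m - c * f'' m`.
  rw [intervalIntegral.integral_sub (hfi.sub intervalIntegrable_const) intervalIntegrable_const,
    intervalIntegral.integral_sub hfi intervalIntegrable_const, hmid,
    intervalIntegral.integral_const, intervalIntegral.integral_const, smul_eq_mul, smul_eq_mul]
  field_simp [sub_ne_zero.2 hab.ne']
  ring
end

section
/- Let f : I → [0,∞) be three times differentiable on the interior of interval I, a, b in the interior with a < b, f''' integrable on [a,b], and suppose |f'''| is log-convex on [a,b] with |f'''(a)| ≠ |f'''(b)| and both nonzero. Then |(1/(b-a))·∫_a^b f(x) dx − f((a+b)/2) − ((b-a)²/24)·f''((a+b)/2)| ≤ ((b-a)³/96)·(|f'''(b)|·μ_K + |f'''(a)|·μ_M), where K = |f'''(a)|/|f'''(b)|, M = |f'''(b)|/|f'''(a)|, and for any positive c ≠ 1, μ_c = 2·c^{1/2}·(ln c − 6)/(ln c)² + 48·c^{1/2}·(ln c − 2)/(ln c)⁴ + 96/(ln c)⁴. -/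
/-!
Expanding `f` by Taylor's formula with integral remainder about `b` on `[m, b]` and about `a` on
`[a, m]`, `m = (a + b)/2`, and integrating, the error `∫ₐᵇ f - (b - a) f(m) - (b - a)³/24 f''(m)`
becomes `∫ₘᵇ (b - t)³/6 f'''(t) dt - ∫ₐᵐ (t - a)³/6 f'''(t) dt`. Log-convexity between `a` and `b`
bounds `|f'''(t)|` by `|f'''(b)| K^((b - t)/(b - a))` and by `|f'''(a)| M^((t - a)/(b - a))`; with
these majorants both kernels integrate in closed form to `(b - a)⁴/96 · μ`.
-/

open MeasureTheory intervalIntegral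

noncomputable def mu (c : ℝ) : ℝ :=
  2 * c ^ ((1:ℝ)/2) * (Real.log c - 6) / (Real.log c) ^ 2
    + 48 * c ^ ((1:ℝ)/2) * (Real.log c - 2) / (Real.log c) ^ 4
    + 96 / (Real.log c) ^ 4

open Real Set

section Taylor

variable {f f' f'' f''' : ℝ → ℝ} {x y : ℝ}

theorem integral_sub_pow_three_mul_third_deriv (hxy : x ≤ y)
    (hf' : ∀ t ∈ Icc x y, HasDerivAt f (f' t) t)
    (hf'' : ∀ t ∈ Icc x y, HasDerivAt f' (f'' t) t)
    (hf''' : ∀ t ∈ Icc x y, HasDerivAt f'' (f''' t) t)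
    (hint : IntervalIntegrable f''' volume x y) :
    ∫ t in x..y, (y - t) ^ 3 / 6 * f''' t =
      (∫ t in x..y, f t) - (y - x) ^ 3 / 6 * f'' x - (y - x) ^ 2 / 2 * f' x - (y - x) * f x := by
  rw [← uIcc_of_le hxy] at hf' hf'' hf'''
  have hF : IntervalIntegrable f volume x y :=
    ContinuousOn.intervalIntegrable fun t ht => (hf' t ht).continuousAt.continuousWithinAt
  have hK : IntervalIntegrable (fun t => (y - t) ^ 3 / 6 * f''' t) volume x y :=
    hint.continuousOn_mul (by fun_prop)
  have hderiv : ∀ t ∈ uIcc x y, HasDerivAt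
      (fun t => (y - t) ^ 3 / 6 * f'' t + (y - t) ^ 2 / 2 * f' t + (y - t) * f t)
      ((y - t) ^ 3 / 6 * f''' t - f t) t := by
    intro t ht
    have hyt : HasDerivAt (fun s => y - s) (-1) t := by
      simpa using (hasDerivAt_id t).const_sub y
    refine ((((hyt.pow 3).div_const 6).mul (hf''' t ht)).add
      (((hyt.pow 2).div_const 2).mul (hf'' t ht))).add (hyt.mul (hf' t ht)) |>.congr_deriv ?_
    norm_num
    ring
  have hFTC := integral_eq_sub_of_hasDerivAt hderiv (hK.sub hF)
  rw [integral_sub hK hF] at hFTC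
  simp only [sub_self, zero_pow three_ne_zero, zero_pow two_ne_zero] at hFTC
  linarith

theorem integral_pow_three_sub_mul_third_deriv (hxy : x ≤ y)
    (hf' : ∀ t ∈ Icc x y, HasDerivAt f (f' t) t)
    (hf'' : ∀ t ∈ Icc x y, HasDerivAt f' (f'' t) t)
    (hf''' : ∀ t ∈ Icc x y, HasDerivAt f'' (f''' t) t)
    (hint : IntervalIntegrable f''' volume x y) :
    ∫ t in x..y, (t - x) ^ 3 / 6 * f''' t =
      (y - x) ^ 3 / 6 * f'' y - (y - x) ^ 2 / 2 * f' y + (y - x) * f y - ∫ t in x..y, f t := by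
  rw [← uIcc_of_le hxy] at hf' hf'' hf'''
  have hF : IntervalIntegrable f volume x y :=
    ContinuousOn.intervalIntegrable fun t ht => (hf' t ht).continuousAt.continuousWithinAt
  have hK : IntervalIntegrable (fun t => (t - x) ^ 3 / 6 * f''' t) volume x y :=
    hint.continuousOn_mul (by fun_prop)
  have hderiv : ∀ t ∈ uIcc x y, HasDerivAt
      (fun t => (t - x) ^ 3 / 6 * f'' t - (t - x) ^ 2 / 2 * f' t + (t - x) * f t)
      ((t - x) ^ 3 / 6 * f''' t + f t) t := by
    intro t ht
    have htx : HasDerivAt (fun s => s - x) 1 t := (hasDerivAt_id t).sub_const x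
    refine ((((htx.pow 3).div_const 6).mul (hf''' t ht)).sub
      (((htx.pow 2).div_const 2).mul (hf'' t ht))).add (htx.mul (hf' t ht)) |>.congr_deriv ?_
    norm_num
    ring
  have hFTC := integral_eq_sub_of_hasDerivAt hderiv (hK.add hF)
  rw [integral_add hK hF] at hFTC
  simp only [sub_self, zero_pow three_ne_zero, zero_pow two_ne_zero] at hFTC
  linarith

end Taylor

theorem integral_midpoint_error_eq {f f' f'' f''' : ℝ → ℝ} {a b : ℝ} (hab : a ≤ b)
    (hf' : ∀ t ∈ Icc a b, HasDerivAt f (f' t) t)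
    (hf'' : ∀ t ∈ Icc a b, HasDerivAt f' (f'' t) t)
    (hf''' : ∀ t ∈ Icc a b, HasDerivAt f'' (f''' t) t)
    (hint : IntervalIntegrable f''' volume a b) :
    ∫ x in a..b, (f x - f ((a + b) / 2) - (b - a) ^ 2 / 24 * f'' ((a + b) / 2)) =
      (∫ t in (a + b) / 2..b, (b - t) ^ 3 / 6 * f''' t)
        - ∫ t in a..(a + b) / 2, (t - a) ^ 3 / 6 * f''' t := by
  set m := (a + b) / 2 with hm
  have ham : a ≤ m := by linarith
  have hmb : m ≤ b := by linarith
  have hmab : m ∈ uIcc a b := by rw [uIcc_of_le hab]; exact ⟨ham, hmb⟩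
  have hF : IntervalIntegrable f volume a b := ContinuousOn.intervalIntegrable fun t ht =>
    (hf' t (uIcc_of_le hab ▸ ht)).continuousAt.continuousWithinAt
  have hL : Icc a m ⊆ Icc a b := Icc_subset_Icc_right hmb
  have hR : Icc m b ⊆ Icc a b := Icc_subset_Icc_left ham
  rw [integral_sub (hF.sub intervalIntegrable_const) intervalIntegrable_const,
    integral_sub hF intervalIntegrable_const, intervalIntegral.integral_const,
    intervalIntegral.integral_const, smul_eq_mul,
    smul_eq_mul, ← integral_add_adjacent_intervals (hF.mono_set (uIcc_subset_uIcc_left hmab))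
      (hF.mono_set (uIcc_subset_uIcc_right hmab)),
    integral_sub_pow_three_mul_third_deriv hmb (fun t ht => hf' t (hR ht))
      (fun t ht => hf'' t (hR ht)) (fun t ht => hf''' t (hR ht))
      (hint.mono_set (uIcc_subset_uIcc_right hmab)),
    integral_pow_three_sub_mul_third_deriv ham (fun t ht => hf' t (hL ht))
      (fun t ht => hf'' t (hL ht)) (fun t ht => hf''' t (hL ht))
      (hint.mono_set (uIcc_subset_uIcc_left hmab))]
  rw [hm]
  ring

theorem rpow_mul_rpow_one_sub_eq_mul_exp {p q : ℝ} (hp : 0 < p) (hq : 0 < q) (α : ℝ) :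
    p ^ α * q ^ (1 - α) = q * exp (log (p / q) * α) := by
  rw [rpow_def_of_pos hp, rpow_def_of_pos hq, ← exp_add, log_div hp.ne' hq.ne',
    show log p * α + log q * (1 - α) = log q + (log p - log q) * α by ring, exp_add, exp_log hq]

theorem le_mul_exp_of_log_convex {g : ℝ → ℝ} {a b t : ℝ} (hab : a < b)
    (hg : ∀ x ∈ Icc a b, ∀ y ∈ Icc a b, ∀ α ∈ Icc (0:ℝ) 1,
      g (α * x + (1 - α) * y) ≤ g x ^ α * g y ^ (1 - α))
    (ha : 0 < g a) (hb : 0 < g b) (ht : t ∈ Icc a b) :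
    g t ≤ g a * exp (log (g b / g a) / (b - a) * (t - a)) ∧
      g t ≤ g b * exp (log (g a / g b) / (b - a) * (b - t)) := by
  have hba : 0 < b - a := sub_pos.2 hab
  set α := (t - a) / (b - a) with hα
  have hα01 : α ∈ Icc (0:ℝ) 1 :=
    ⟨div_nonneg (by linarith [ht.1]) hba.le, div_le_one_of_le₀ (by linarith [ht.2]) hba.le⟩
  have h := hg b (right_mem_Icc.2 hab.le) a (left_mem_Icc.2 hab.le) α hα01
  rw [show α * b + (1 - α) * a = t by rw [hα]; field_simp; ring] at h
  constructor
  · rw [rpow_mul_rpow_one_sub_eq_mul_exp hb ha] at h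
    refine h.trans_eq ?_
    congr 2
    rw [hα]
    ring
  · set β := 1 - α with hβ
    rw [mul_comm, show α = 1 - β by rw [hβ]; ring, rpow_mul_rpow_one_sub_eq_mul_exp ha hb] at h
    refine h.trans_eq ?_
    congr 2
    rw [hβ, hα]
    field_simp
    ring

theorem integral_pow_three_mul_exp {c : ℝ} (hc : c ≠ 0) (h : ℝ) :
    ∫ u in (0:ℝ)..h, u ^ 3 / 6 * exp (c * u) =
      exp (c * h) * (h ^ 3 / (6 * c) - h ^ 2 / (2 * c ^ 2) + h / c ^ 3 - 1 / c ^ 4)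
        + 1 / c ^ 4 := by
  have hderiv : ∀ u, HasDerivAt
      (fun u => exp (c * u) * (u ^ 3 / (6 * c) - u ^ 2 / (2 * c ^ 2) + u / c ^ 3 - 1 / c ^ 4))
      (u ^ 3 / 6 * exp (c * u)) u := by
    intro u
    have hexp : HasDerivAt (fun u => exp (c * u)) (exp (c * u) * c) u :=
      ((hasDerivAt_id u).const_mul c).exp.congr_deriv (by simp)
    refine hexp.mul (((((hasDerivAt_pow 3 u).div_const (6 * c)).fun_sub
      ((hasDerivAt_pow 2 u).div_const (2 * c ^ 2))).fun_add
      ((hasDerivAt_id' u).div_const (c ^ 3))).sub_const (1 / c ^ 4)) |>.congr_deriv ?_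
    field_simp
    ring
  rw [integral_eq_sub_of_hasDerivAt (fun u _ => hderiv u)
    (Continuous.intervalIntegrable (by fun_prop) _ _)]
  simp

theorem integral_pow_three_mul_exp_log_div_eq_mu {c H : ℝ} (hc : 0 < c) (hc1 : c ≠ 1)
    (hH : 0 < H) :
    ∫ u in (0:ℝ)..H / 2, u ^ 3 / 6 * exp (log c / H * u) = H ^ 4 / 96 * mu c := by
  have hL : log c ≠ 0 := log_ne_zero_of_pos_of_ne_one hc hc1
  rw [integral_pow_three_mul_exp (div_ne_zero hL hH.ne'), mu, rpow_def_of_pos hc,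
    show log c / H * (H / 2) = log c * (1 / 2) by field_simp]
  generalize exp (log c * (1 / 2)) = E
  field_simp
  ring

section Kernel

variable {φ : ℝ → ℝ} {x y c C : ℝ}

theorem abs_integral_sub_pow_three_mul_le (hxy : x < y) (hc : 0 < c) (hc1 : c ≠ 1)
    (hφ : ∀ t ∈ Icc ((x + y) / 2) y, |φ t| ≤ C * exp (log c / (y - x) * (y - t))) :
    |∫ t in (x + y) / 2..y, (y - t) ^ 3 / 6 * φ t| ≤ C * ((y - x) ^ 4 / 96 * mu c) := by
  have hmajorant : ∫ t in (x + y) / 2..y, C * ((y - t) ^ 3 / 6 * exp (log c / (y - x) * (y - t)))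
      = C * ((y - x) ^ 4 / 96 * mu c) := by
    have hsubst := integral_comp_sub_left
      (fun u => u ^ 3 / 6 * exp (log c / (y - x) * u)) y (a := (x + y) / 2) (b := y)
    rw [intervalIntegral.integral_const_mul, hsubst, sub_self, show y - (x + y) / 2 = (y - x) / 2 by ring,
      integral_pow_three_mul_exp_log_div_eq_mu hc hc1 (sub_pos.2 hxy)]
  rw [← norm_eq_abs]
  refine (norm_integral_le_of_norm_le (by linarith) (ae_of_all _ fun t ht => ?_)
    (Continuous.intervalIntegrable (by fun_prop) _ _)).trans hmajorant.le
  have hk : 0 ≤ (y - t) ^ 3 / 6 := by have := sub_nonneg.2 ht.2; positivity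
  rw [norm_mul, norm_of_nonneg hk, mul_left_comm]
  exact mul_le_mul_of_nonneg_left (hφ t ⟨ht.1.le, ht.2⟩) hk

theorem abs_integral_pow_three_sub_mul_le (hxy : x < y) (hc : 0 < c) (hc1 : c ≠ 1)
    (hφ : ∀ t ∈ Icc x ((x + y) / 2), |φ t| ≤ C * exp (log c / (y - x) * (t - x))) :
    |∫ t in x..(x + y) / 2, (t - x) ^ 3 / 6 * φ t| ≤ C * ((y - x) ^ 4 / 96 * mu c) := by
  have hmajorant : ∫ t in x..(x + y) / 2, C * ((t - x) ^ 3 / 6 * exp (log c / (y - x) * (t - x)))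
      = C * ((y - x) ^ 4 / 96 * mu c) := by
    have hsubst := integral_comp_sub_right
      (fun u => u ^ 3 / 6 * exp (log c / (y - x) * u)) x (a := x) (b := (x + y) / 2)
    rw [intervalIntegral.integral_const_mul, hsubst, sub_self, show (x + y) / 2 - x = (y - x) / 2 by ring,
      integral_pow_three_mul_exp_log_div_eq_mu hc hc1 (sub_pos.2 hxy)]
  rw [← norm_eq_abs]
  refine (norm_integral_le_of_norm_le (by linarith) (ae_of_all _ fun t ht => ?_)
    (Continuous.intervalIntegrable (by fun_prop) _ _)).trans hmajorant.le
  have hk : 0 ≤ (t - x) ^ 3 / 6 := by have := sub_nonneg.2 ht.1.le; positivity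
  rw [norm_mul, norm_of_nonneg hk, mul_left_comm]
  exact mul_le_mul_of_nonneg_left (hφ t ⟨ht.1.le, ht.2⟩) hk

end Kernel

theorem thm_2_1_general
    (I : Set ℝ) (hI : I.OrdConnected)
    (f f' f'' f''' : ℝ → ℝ)
    (a b : ℝ) (ha : a ∈ interior I) (hb : b ∈ interior I) (hab : a < b)
    (hf' : ∀ x ∈ interior I, HasDerivAt f (f' x) x)
    (hf'' : ∀ x ∈ interior I, HasDerivAt f' (f'' x) x)
    (hf''' : ∀ x ∈ interior I, HasDerivAt f'' (f''' x) x)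
    (hint : IntegrableOn f''' (Set.Icc a b))
    (hlog : ∀ x ∈ Set.Icc a b, ∀ y ∈ Set.Icc a b, ∀ α ∈ Set.Icc (0:ℝ) 1,
      |f''' (α * x + (1 - α) * y)| ≤ |f''' x| ^ α * |f''' y| ^ (1 - α))
    (hA : 0 < |f''' a|) (hB : 0 < |f''' b|) (hne : |f''' a| ≠ |f''' b|) :
    |(1 / (b - a)) * ∫ x in a..b, f x - f ((a + b) / 2)
        - ((b - a) ^ 2 / 24) * f'' ((a + b) / 2)|
    ≤ ((b - a) ^ 3 / 96) *
        (|f''' b| * mu (|f''' a| / |f''' b|)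
          + |f''' a| * mu (|f''' b| / |f''' a|)) := by
  have hsub : Icc a b ⊆ interior I := hI.interior.out ha hb
  have hexp t (ht : t ∈ Icc a b) :=
    le_mul_exp_of_log_convex (g := fun x => |f''' x|) hab hlog hA hB ht
  have hR := abs_integral_sub_pow_three_mul_le hab (div_pos hA hB)
    (by rwa [ne_eq, div_eq_one_iff_eq hB.ne']) fun t ht =>
      (hexp t (Icc_subset_Icc_left (by linarith) ht)).2
  have hL := abs_integral_pow_three_sub_mul_le hab (div_pos hB hA)
    (by rwa [ne_eq, div_eq_one_iff_eq hA.ne', eq_comm]) fun t ht =>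
      (hexp t (Icc_subset_Icc_right (by linarith) ht)).1
  rw [integral_midpoint_error_eq hab.le (fun t ht => hf' t (hsub ht))
    (fun t ht => hf'' t (hsub ht)) (fun t ht => hf''' t (hsub ht))
    ((intervalIntegrable_iff_integrableOn_Icc_of_le hab.le).2 hint),
    abs_mul, abs_of_pos (one_div_pos.2 (sub_pos.2 hab))]
  calc 1 / (b - a) * |(∫ t in (a + b) / 2..b, (b - t) ^ 3 / 6 * f''' t)
        - ∫ t in a..(a + b) / 2, (t - a) ^ 3 / 6 * f''' t|
      ≤ 1 / (b - a) * (|f''' b| * ((b - a) ^ 4 / 96 * mu (|f''' a| / |f''' b|))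
          + |f''' a| * ((b - a) ^ 4 / 96 * mu (|f''' b| / |f''' a|))) := by
        gcongr
        exact (abs_sub _ _).trans (add_le_add hR hL)
    _ = (b - a) ^ 3 / 96 * (|f''' b| * mu (|f''' a| / |f''' b|)
          + |f''' a| * mu (|f''' b| / |f''' a|)) := by
        field_simp [(sub_pos.2 hab).ne']

theorem thm_2_1
    (I : Set ℝ) (hI : I.OrdConnected)
    (f f' f'' f''' : ℝ → ℝ)
    (hfpos : ∀ x ∈ I, 0 ≤ f x)
    (a b : ℝ) (ha : a ∈ interior I) (hb : b ∈ interior I) (hab : a < b)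
    (hf' : ∀ x ∈ interior I, HasDerivAt f (f' x) x)
    (hf'' : ∀ x ∈ interior I, HasDerivAt f' (f'' x) x)
    (hf''' : ∀ x ∈ interior I, HasDerivAt f'' (f''' x) x)
    (hint : IntegrableOn f''' (Set.Icc a b))
    (hlog : ∀ x ∈ Set.Icc a b, ∀ y ∈ Set.Icc a b, ∀ α ∈ Set.Icc (0:ℝ) 1,
      |f''' (α * x + (1 - α) * y)| ≤ |f''' x| ^ α * |f''' y| ^ (1 - α))
    (hA : 0 < |f''' a|) (hB : 0 < |f''' b|) (hne : |f''' a| ≠ |f''' b|) :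
    |(1 / (b - a)) * ∫ x in a..b, f x - f ((a + b) / 2)
        - ((b - a) ^ 2 / 24) * f'' ((a + b) / 2)|
    ≤ ((b - a) ^ 3 / 96) *
        (|f''' b| * mu (|f''' a| / |f''' b|)
          + |f''' a| * mu (|f''' b| / |f''' a|)) :=
  thm_2_1_general I hI f f' f'' f''' a b ha hb hab hf' hf'' hf''' hint hlog hA hB hne
end

section
/- Let f : I → [0,∞) be three times differentiable on the interior of interval I, a, b in the interior with a < b, f''' integrable on [a,b], with f''((a+b)/2) = 0, and |f'''| log-convex on [a,b] with |f'''(a)|, |f'''(b)| positive and distinct. Then |(1/(b-a))·∫_a^b f(x) dx − f((a+b)/2)| ≤ ((b-a)³/96)·(|f'''(b)|·μ_K + |f'''(a)|·μ_M), where K = |f'''(a)|/|f'''(b)|, M = |f'''(b)|/|f'''(a)|, and μ_c = 2·c^{1/2}·(ln c − 6)/(ln c)² + 48·c^{1/2}·(ln c − 2)/(ln c)⁴ + 96/(ln c)⁴ for positive c ≠ 1. -/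
open MeasureTheory intervalIntegral

/-! Integrating by parts three times on each half of `[a, b]`, starting from the midpoint `m`
where `f''` vanishes, and reflecting the right half onto the left one gives
`∫_a^b (f - f m) = ∫_a^m (t - a)³/6 · (f'''(a + b - t) - f'''(t)) dt`.
Log-convexity along the chord bounds `|f'''(a + s (b - a))|` by `|f'''(a)| · c^s` with
`c = |f'''(b)| / |f'''(a)|`, and `μ_c = 16 ∫_0^{1/2} s³ c^s ds`; the reflected term obeys the
same estimate with `a` and `b` exchanged. -/

open Real Set
open scoped Nat

theorem hasDerivAt_antideriv_cube_mul_exp {L : ℝ} (hL : L ≠ 0) (s : ℝ) :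
    HasDerivAt (fun s => exp (L * s) * (L ^ 3 * s ^ 3 - 3 * L ^ 2 * s ^ 2 + 6 * L * s - 6) / L ^ 4)
      (s ^ 3 * exp (L * s)) s := by
  have hexp : HasDerivAt (fun s => exp (L * s)) (exp (L * s) * L) s := by
    simpa using ((hasDerivAt_id s).const_mul L).exp
  have hpoly : HasDerivAt (fun s => L ^ 3 * s ^ 3 - 3 * L ^ 2 * s ^ 2 + 6 * L * s - 6)
      (L ^ 3 * (3 * s ^ 2) - 3 * L ^ 2 * (2 * s) + 6 * L) s := by
    have := ((((hasDerivAt_pow 3 s).const_mul (L ^ 3)).sub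
      ((hasDerivAt_pow 2 s).const_mul (3 * L ^ 2))).add
      ((hasDerivAt_id s).const_mul (6 * L))).sub_const 6
    exact this.congr_deriv (by norm_num)
  refine ((hexp.mul hpoly).div_const (L ^ 4)).congr_deriv ?_
  field_simp
  ring

theorem mu_eq_integral {c : ℝ} (hc : 0 < c) (hc1 : c ≠ 1) :
    mu c = 16 * ∫ s in (0:ℝ)..1/2, s ^ 3 * c ^ s := by
  have hL : log c ≠ 0 := log_ne_zero_of_pos_of_ne_one hc hc1
  have hrpow : ∀ s : ℝ, c ^ s = exp (log c * s) := fun s => by rw [rpow_def_of_pos hc]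
  simp_rw [mu, hrpow]
  rw [integral_eq_sub_of_hasDerivAt (fun s _ => hasDerivAt_antideriv_cube_mul_exp hL s)
    ((by fun_prop : Continuous fun s => s ^ 3 * exp (log c * s)).intervalIntegrable _ _)]
  simp only [mul_zero, exp_zero]
  field_simp
  ring

theorem integral_pow_div_factorial_mul_deriv {g g' : ℝ → ℝ} {x₀ x : ℝ} (n : ℕ)
    (hg : ∀ t ∈ uIcc x₀ x, HasDerivAt g (g' t) t)
    (hg' : IntervalIntegrable g' volume x₀ x) :
    ∫ t in x₀..x, (x - t) ^ (n + 1) / (n + 1)! * g' t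
      = (∫ t in x₀..x, (x - t) ^ n / n ! * g t) - (x - x₀) ^ (n + 1) / (n + 1)! * g x₀ := by
  have hw : ∀ t, HasDerivAt (fun t => (x - t) ^ (n + 1) / (n + 1)!) (-((x - t) ^ n / n !)) t := by
    intro t
    refine ((((hasDerivAt_id t).const_sub x).pow (n + 1)).div_const ((n + 1)! : ℝ)).congr_deriv ?_
    rw [Nat.factorial_succ]
    push_cast
    field_simp
    simp
  rw [integral_mul_deriv_eq_deriv_mul (fun t _ => hw t) hg
    ((by fun_prop : Continuous fun t => -((x - t) ^ n / n !)).intervalIntegrable _ _) hg']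
  simp only [sub_self, zero_pow n.succ_ne_zero, zero_div, zero_mul, neg_mul,
    intervalIntegral.integral_neg]
  ring

theorem integral_cube_mul_third_deriv {f f' f'' f''' : ℝ → ℝ} {x₀ x : ℝ}
    (hf' : ∀ t ∈ uIcc x₀ x, HasDerivAt f (f' t) t)
    (hf'' : ∀ t ∈ uIcc x₀ x, HasDerivAt f' (f'' t) t)
    (hf''' : ∀ t ∈ uIcc x₀ x, HasDerivAt f'' (f''' t) t)
    (hint : IntervalIntegrable f''' volume x₀ x) :
    ∫ t in x₀..x, (x - t) ^ 3 / 6 * f''' t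
      = (∫ t in x₀..x, f t) - (x - x₀) * f x₀ - (x - x₀) ^ 2 / 2 * f' x₀
        - (x - x₀) ^ 3 / 6 * f'' x₀ := by
  have hintegrable : ∀ {g g' : ℝ → ℝ}, (∀ t ∈ uIcc x₀ x, HasDerivAt g (g' t) t) →
      IntervalIntegrable g volume x₀ x := fun hg =>
    ContinuousOn.intervalIntegrable fun t ht => (hg t ht).continuousAt.continuousWithinAt
  have h2 := integral_pow_div_factorial_mul_deriv 2 hf''' hint
  have h1 := integral_pow_div_factorial_mul_deriv 1 hf'' (hintegrable hf''')
  have h0 := integral_pow_div_factorial_mul_deriv 0 hf' (hintegrable hf'')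
  norm_num [Nat.factorial] at h2 h1 h0
  rw [h2, h1, h0]

theorem abs_le_mul_rpow_of_chord {g : ℝ → ℝ} {a b t : ℝ} (hab : a < b)
    (hchord : ∀ α ∈ Icc (0:ℝ) 1,
      |g (α * b + (1 - α) * a)| ≤ |g b| ^ α * |g a| ^ (1 - α))
    (ha : 0 < |g a|) (hb : 0 < |g b|) (ht : t ∈ Icc a b) :
    |g t| ≤ |g a| * (|g b| / |g a|) ^ ((t - a) / (b - a)) := by
  have hba : 0 < b - a := sub_pos.mpr hab
  set α := (t - a) / (b - a)
  have hα : α ∈ Icc (0:ℝ) 1 :=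
    ⟨div_nonneg (by linarith [ht.1]) hba.le, (div_le_one hba).mpr (by linarith [ht.2])⟩
  have hchord_t := hchord α hα
  rw [show α * b + (1 - α) * a = t by simp only [α]; field_simp; ring] at hchord_t
  convert hchord_t using 1
  rw [rpow_sub ha, rpow_one, div_rpow hb.le ha.le]
  ring

theorem integral_cube_mul_const_rpow {a b : ℝ} (hab : a ≠ b) (K c : ℝ) :
    ∫ t in a..(a + b) / 2, (t - a) ^ 3 / 6 * (K * c ^ ((t - a) / (b - a)))
      = (b - a) ^ 4 / 6 * K * ∫ s in (0:ℝ)..1/2, s ^ 3 * c ^ s := by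
  have hba : b - a ≠ 0 := sub_ne_zero.mpr hab.symm
  have hsubst := smul_integral_comp_add_mul (a := 0) (b := 1/2)
    (fun t => (t - a) ^ 3 / 6 * (K * c ^ ((t - a) / (b - a)))) (b - a) a
  rw [show a + (b - a) * 0 = a by ring, show a + (b - a) * (1 / 2) = (a + b) / 2 by ring]
    at hsubst
  rw [← hsubst, smul_eq_mul, ← intervalIntegral.integral_const_mul,
    ← intervalIntegral.integral_const_mul]
  refine integral_congr fun s _ => ?_
  simp only [add_sub_cancel_left, mul_div_cancel_left₀ s hba]
  ring

theorem abs_integral_cube_mul_le_mu {g : ℝ → ℝ} {a b : ℝ} (hab : a < b)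
    (hg : IntervalIntegrable g volume a b)
    (hchord : ∀ α ∈ Icc (0:ℝ) 1,
      |g (α * b + (1 - α) * a)| ≤ |g b| ^ α * |g a| ^ (1 - α))
    (ha : 0 < |g a|) (hb : 0 < |g b|) (hne : |g a| ≠ |g b|) :
    |∫ t in a..(a + b) / 2, (t - a) ^ 3 / 6 * g t|
      ≤ (b - a) ^ 4 / 96 * (|g a| * mu (|g b| / |g a|)) := by
  set c := |g b| / |g a|
  have hcpos : 0 < c := div_pos hb ha
  have hc1 : c ≠ 1 := fun h => hne ((div_eq_one_iff_eq ha.ne').mp h).symm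
  have ham : a ≤ (a + b) / 2 := by linarith
  have hmb : (a + b) / 2 ≤ b := by linarith
  have hbound : ∀ t ∈ Icc a ((a + b) / 2),
      |(t - a) ^ 3 / 6 * g t| ≤ (t - a) ^ 3 / 6 * (|g a| * c ^ ((t - a) / (b - a))) := by
    rintro t ⟨hat, htm⟩
    have hweight : 0 ≤ (t - a) ^ 3 / 6 := by have := sub_nonneg.mpr hat; positivity
    rw [abs_mul, abs_of_nonneg hweight]
    exact mul_le_mul_of_nonneg_left
      (abs_le_mul_rpow_of_chord hab hchord ha hb ⟨hat, htm.trans hmb⟩) hweight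
  have hint_abs : IntervalIntegrable (fun t => |(t - a) ^ 3 / 6 * g t|) volume a ((a + b) / 2) :=
    ((hg.mono_set (uIcc_subset_uIcc_left (mem_uIcc_of_le ham hmb))).continuousOn_mul
      (by fun_prop)).abs
  have hint_bound : IntervalIntegrable
      (fun t => (t - a) ^ 3 / 6 * (|g a| * c ^ ((t - a) / (b - a)))) volume a ((a + b) / 2) :=
    (by fun_prop (disch := exact hcpos.ne') : Continuous fun t =>
      (t - a) ^ 3 / 6 * (|g a| * c ^ ((t - a) / (b - a)))).intervalIntegrable _ _
  calc |∫ t in a..(a + b) / 2, (t - a) ^ 3 / 6 * g t|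
      ≤ ∫ t in a..(a + b) / 2, |(t - a) ^ 3 / 6 * g t| := abs_integral_le_integral_abs ham
    _ ≤ ∫ t in a..(a + b) / 2, (t - a) ^ 3 / 6 * (|g a| * c ^ ((t - a) / (b - a))) :=
      integral_mono_on ham hint_abs hint_bound hbound
    _ = (b - a) ^ 4 / 96 * (|g a| * mu c) := by
      rw [integral_cube_mul_const_rpow hab.ne, mu_eq_integral hcpos hc1]
      ring

theorem integral_sub_midpoint_eq {f f' f'' f''' : ℝ → ℝ} {a b : ℝ}
    (hf' : ∀ t ∈ uIcc a b, HasDerivAt f (f' t) t)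
    (hf'' : ∀ t ∈ uIcc a b, HasDerivAt f' (f'' t) t)
    (hf''' : ∀ t ∈ uIcc a b, HasDerivAt f'' (f''' t) t)
    (hint : IntervalIntegrable f''' volume a b) (hmid : f'' ((a + b) / 2) = 0) :
    ∫ x in a..b, (f x - f ((a + b) / 2))
      = (∫ t in a..(a + b) / 2, (t - a) ^ 3 / 6 * f''' (a + b - t))
        - ∫ t in a..(a + b) / 2, (t - a) ^ 3 / 6 * f''' t := by
  have hm_mem : (a + b) / 2 ∈ uIcc a b := by
    rw [mem_uIcc]; rcases le_total a b with h | h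
    · left; constructor <;> linarith
    · right; constructor <;> linarith
  set m := (a + b) / 2
  have hma : uIcc m a ⊆ uIcc a b := uIcc_subset_uIcc hm_mem left_mem_uIcc
  have hmb : uIcc m b ⊆ uIcc a b := uIcc_subset_uIcc hm_mem right_mem_uIcc
  have hfi : IntervalIntegrable f volume a b :=
    ContinuousOn.intervalIntegrable fun t ht => (hf' t ht).continuousAt.continuousWithinAt
  have taylor_a := integral_cube_mul_third_deriv (fun t ht => hf' t (hma ht))
    (fun t ht => hf'' t (hma ht)) (fun t ht => hf''' t (hma ht)) (hint.mono_set hma)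
  have taylor_b := integral_cube_mul_third_deriv (fun t ht => hf' t (hmb ht))
    (fun t ht => hf'' t (hmb ht)) (fun t ht => hf''' t (hmb ht)) (hint.mono_set hmb)
  have hreflect : ∫ t in a..m, (t - a) ^ 3 / 6 * f''' (a + b - t)
      = ∫ t in m..b, (b - t) ^ 3 / 6 * f''' t := by
    have := integral_comp_sub_left (a := a) (b := m) (fun t => (b - t) ^ 3 / 6 * f''' t) (a + b)
    rw [show a + b - m = m by simp only [m]; ring, add_sub_cancel_left] at this
    rw [← this]
    refine intervalIntegral.integral_congr fun t _ => ?_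
    ring_nf
  have hflip : ∫ t in a..m, (t - a) ^ 3 / 6 * f''' t
      = ∫ t in m..a, (a - t) ^ 3 / 6 * f''' t := by
    rw [integral_symm, ← intervalIntegral.integral_neg]
    refine intervalIntegral.integral_congr fun t _ => ?_
    ring
  rw [hreflect, hflip, taylor_a, taylor_b, hmid,
    intervalIntegral.integral_sub hfi intervalIntegrable_const, intervalIntegral.integral_const,
    ← integral_add_adjacent_intervals (hfi.mono_set (uIcc_comm a m ▸ hma)) (hfi.mono_set hmb),
    smul_eq_mul, integral_symm m a]
  simp only [m]
  ring

theorem cor_1_1_general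
    (I : Set ℝ) (hI : I.OrdConnected)
    (f f' f'' f''' : ℝ → ℝ)
    (a b : ℝ) (ha : a ∈ interior I) (hb : b ∈ interior I) (hab : a < b)
    (hf' : ∀ x ∈ interior I, HasDerivAt f (f' x) x)
    (hf'' : ∀ x ∈ interior I, HasDerivAt f' (f'' x) x)
    (hf''' : ∀ x ∈ interior I, HasDerivAt f'' (f''' x) x)
    (hint : IntegrableOn f''' (Set.Icc a b))
    (hlog : ∀ x ∈ Set.Icc a b, ∀ y ∈ Set.Icc a b, ∀ α ∈ Set.Icc (0:ℝ) 1,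
      |f''' (α * x + (1 - α) * y)| ≤ |f''' x| ^ α * |f''' y| ^ (1 - α))
    (hmid : f'' ((a + b) / 2) = 0)
    (hA : 0 < |f''' a|) (hB : 0 < |f''' b|) (hne : |f''' a| ≠ |f''' b|) :
    |(1 / (b - a)) * ∫ x in a..b, f x - f ((a + b) / 2)|
    ≤ ((b - a) ^ 3 / 96) *
        (|f''' b| * mu (|f''' a| / |f''' b|)
          + |f''' a| * mu (|f''' b| / |f''' a|)) := by
  have hsub : uIcc a b ⊆ interior I := (uIcc_of_le hab.le).trans_subset (hI.interior.out ha hb)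
  have hint_ab : IntervalIntegrable f''' volume a b :=
    (intervalIntegrable_iff_integrableOn_Icc_of_le hab.le).mpr hint
  have hint_reflect : IntervalIntegrable (fun t => f''' (a + b - t)) volume a b := by
    simpa using (hint_ab.comp_sub_left (a + b)).symm
  have bound_a := abs_integral_cube_mul_le_mu hab hint_ab
    (hlog b (right_mem_Icc.mpr hab.le) a (left_mem_Icc.mpr hab.le)) hA hB hne
  have bound_b := abs_integral_cube_mul_le_mu (g := fun t => f''' (a + b - t)) hab hint_reflect
    (fun α hα => by
      simpa only [add_sub_cancel_left, add_sub_cancel_right,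
        show a + b - (α * b + (1 - α) * a) = α * a + (1 - α) * b by ring]
        using hlog a (left_mem_Icc.mpr hab.le) b (right_mem_Icc.mpr hab.le) α hα)
    (by simpa using hB) (by simpa using hA) (by simpa using hne.symm)
  simp only [add_sub_cancel_left, add_sub_cancel_right] at bound_b
  have hba : 0 < b - a := sub_pos.mpr hab
  rw [integral_sub_midpoint_eq (fun x hx => hf' x (hsub hx)) (fun x hx => hf'' x (hsub hx))
    (fun x hx => hf''' x (hsub hx)) hint_ab hmid, abs_mul, abs_of_pos (one_div_pos.mpr hba)]
  calc 1 / (b - a) * |(∫ t in a..(a + b) / 2, (t - a) ^ 3 / 6 * f''' (a + b - t))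
        - ∫ t in a..(a + b) / 2, (t - a) ^ 3 / 6 * f''' t|
      ≤ 1 / (b - a) * ((b - a) ^ 4 / 96 * (|f''' b| * mu (|f''' a| / |f''' b|))
          + (b - a) ^ 4 / 96 * (|f''' a| * mu (|f''' b| / |f''' a|))) := by
        gcongr
        exact (abs_sub _ _).trans (add_le_add bound_b bound_a)
    _ = (b - a) ^ 3 / 96 * (|f''' b| * mu (|f''' a| / |f''' b|)
          + |f''' a| * mu (|f''' b| / |f''' a|)) := by
        field_simp

theorem cor_1_1
    (I : Set ℝ) (hI : I.OrdConnected)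
    (f f' f'' f''' : ℝ → ℝ)
    (hfpos : ∀ x ∈ I, 0 ≤ f x)
    (a b : ℝ) (ha : a ∈ interior I) (hb : b ∈ interior I) (hab : a < b)
    (hf' : ∀ x ∈ interior I, HasDerivAt f (f' x) x)
    (hf'' : ∀ x ∈ interior I, HasDerivAt f' (f'' x) x)
    (hf''' : ∀ x ∈ interior I, HasDerivAt f'' (f''' x) x)
    (hint : IntegrableOn f''' (Set.Icc a b))
    (hlog : ∀ x ∈ Set.Icc a b, ∀ y ∈ Set.Icc a b, ∀ α ∈ Set.Icc (0:ℝ) 1,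
      |f''' (α * x + (1 - α) * y)| ≤ |f''' x| ^ α * |f''' y| ^ (1 - α))
    (hmid : f'' ((a + b) / 2) = 0)
    (hA : 0 < |f''' a|) (hB : 0 < |f''' b|) (hne : |f''' a| ≠ |f''' b|) :
    |(1 / (b - a)) * ∫ x in a..b, f x - f ((a + b) / 2)|
    ≤ ((b - a) ^ 3 / 96) *
        (|f''' b| * mu (|f''' a| / |f''' b|)
          + |f''' a| * mu (|f''' b| / |f''' a|)) :=
  cor_1_1_general I hI f f' f'' f''' a b ha hb hab hf' hf'' hf''' hint hlog hmid hA hB hne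
end

section
/- Let f : I → [0,∞) be three times differentiable on the interior of interval I, a, b in the interior with a < b, f''' integrable on [a,b], and let q > 1 with 1/p + 1/q = 1. Suppose |f'''|^q is log-convex on [a,b] and |f'''(a)|, |f'''(b)| are positive and distinct. Then |(1/(b-a))·∫_a^b f(x) dx − f((a+b)/2) − ((b-a)²/24)·f''((a+b)/2)| ≤ ((b-a)³/96)·(1/(3p+1))^{1/p}·[ |f'''(b)|·((2/(q·ln K))·(K^{q/2} − 1))^{1/q} + |f'''(a)|·((2/(q·ln M))·(M^{q/2} − 1))^{1/q} ], where K = |f'''(a)|/|f'''(b)| and M = |f'''(b)|/|f'''(a)|. -/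
open MeasureTheory intervalIntegral Set Real

/-!
Taylor's formula with integral remainder about the midpoint `m`, applied on each half of `[a, b]`
(three integrations by parts), gives
`6 ∫_a^b (f - f m - (b - a)² / 24 · f'' m)`
`  = ∫_m^b (b - t)³ f''' t dt - ∫_m^b (b - t)³ f''' (a + b - t) dt`.
Log-convexity of `|f'''|^q` between the endpoints bounds `|f''' t|^q` on `[m, b]` by
`|f''' b|^q · exp (q log K · (b - t) / (b - a))` with `K = |f''' a| / |f''' b|`, and Hölder's
inequality against the weight `(b - t)³ ∈ Lᵖ` then bounds the first integral. The reflected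
integral is the same estimate for `t ↦ f''' (a + b - t)`, which exchanges the roles of `a`
and `b`.
-/

theorem add_div_two_mem_uIcc (a b : ℝ) : (a + b) / 2 ∈ uIcc a b := by
  rw [mem_uIcc]
  rcases le_total a b with h | h
  · exact Or.inl ⟨by linarith, by linarith⟩
  · exact Or.inr ⟨by linarith, by linarith⟩

section Taylor

variable {m d : ℝ}

theorem integral_sub_pow_succ_mul_deriv {g g' : ℝ → ℝ} (n : ℕ)
    (hg : ∀ x ∈ uIcc m d, HasDerivAt g (g' x) x) (hg' : IntervalIntegrable g' volume m d) :
    ∫ t in m..d, (d - t) ^ (n + 1) * g' t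
      = -((d - m) ^ (n + 1) * g m) + (n + 1) * ∫ t in m..d, (d - t) ^ n * g t := by
  have hu : ∀ t, HasDerivAt (fun t => (d - t) ^ (n + 1)) (-((n + 1) * (d - t) ^ n)) t := by
    intro t
    simpa using ((hasDerivAt_id t).const_sub d).fun_pow (n + 1)
  rw [integral_mul_deriv_eq_deriv_mul (fun t _ => hu t) hg
    ((by fun_prop : Continuous _).intervalIntegrable _ _) hg']
  simp only [sub_self, zero_pow n.succ_ne_zero, zero_mul, zero_sub, neg_mul,
    intervalIntegral.integral_neg, mul_assoc, intervalIntegral.integral_const_mul]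
  ring

theorem integral_sub_pow_three_mul_eq_taylor {f f' f'' f''' : ℝ → ℝ}
    (hf' : ∀ x ∈ uIcc m d, HasDerivAt f (f' x) x)
    (hf'' : ∀ x ∈ uIcc m d, HasDerivAt f' (f'' x) x)
    (hf''' : ∀ x ∈ uIcc m d, HasDerivAt f'' (f''' x) x)
    (hint : IntervalIntegrable f''' volume m d) :
    ∫ t in m..d, (d - t) ^ 3 * f''' t
      = 6 * (∫ t in m..d, f t) - 6 * (d - m) * f m - 3 * (d - m) ^ 2 * f' m
        - (d - m) ^ 3 * f'' m := by
  have hcont : ∀ {g g' : ℝ → ℝ}, (∀ x ∈ uIcc m d, HasDerivAt g (g' x) x) →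
      IntervalIntegrable g volume m d := fun hg =>
    ContinuousOn.intervalIntegrable fun x hx => (hg x hx).continuousAt.continuousWithinAt
  rw [integral_sub_pow_succ_mul_deriv 2 hf''' hint,
    integral_sub_pow_succ_mul_deriv 1 hf'' (hcont hf'''),
    integral_sub_pow_succ_mul_deriv 0 hf' (hcont hf'')]
  simp only [pow_zero, one_mul]
  push_cast
  ring

end Taylor

theorem integral_sub_pow_three_mul_sub_reflect_eq_midpoint_error {f f' f'' f''' : ℝ → ℝ}
    {a b : ℝ}
    (hf' : ∀ x ∈ uIcc a b, HasDerivAt f (f' x) x)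
    (hf'' : ∀ x ∈ uIcc a b, HasDerivAt f' (f'' x) x)
    (hf''' : ∀ x ∈ uIcc a b, HasDerivAt f'' (f''' x) x)
    (hint : IntervalIntegrable f''' volume a b) :
    (∫ t in (a + b) / 2..b, (b - t) ^ 3 * f''' t)
      - ∫ t in (a + b) / 2..b, (b - t) ^ 3 * f''' (a + b - t)
      = 6 * ∫ x in a..b, f x - f ((a + b) / 2) - (b - a) ^ 2 / 24 * f'' ((a + b) / 2) := by
  set m := (a + b) / 2 with hm
  have hm_mem : m ∈ uIcc a b := add_div_two_mem_uIcc a b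
  have hsub_b : uIcc m b ⊆ uIcc a b := uIcc_subset_uIcc hm_mem right_mem_uIcc
  have hsub_a : uIcc m a ⊆ uIcc a b := uIcc_subset_uIcc hm_mem left_mem_uIcc
  have hreflect : ∫ t in m..b, (b - t) ^ 3 * f''' (a + b - t)
      = ∫ t in m..a, (a - t) ^ 3 * f''' t := by
    have hm' : a + b - m = m := by rw [hm]; ring
    calc ∫ t in m..b, (b - t) ^ 3 * f''' (a + b - t)
        = ∫ t in m..b, -(a - (a + b - t)) ^ 3 * f''' (a + b - t) :=
          integral_congr fun t _ => by ring
      _ = ∫ t in a..m, -(a - t) ^ 3 * f''' t := by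
          rw [integral_comp_sub_left (fun t => -(a - t) ^ 3 * f''' t), add_sub_cancel_right, hm']
      _ = ∫ t in m..a, (a - t) ^ 3 * f''' t := by
          simp only [neg_mul, intervalIntegral.integral_neg, integral_symm m a, neg_neg]
  have hf : IntervalIntegrable f volume a b :=
    ContinuousOn.intervalIntegrable fun x hx => (hf' x hx).continuousAt.continuousWithinAt
  rw [hreflect,
    integral_sub_pow_three_mul_eq_taylor (fun x hx => hf' x (hsub_b hx))
      (fun x hx => hf'' x (hsub_b hx)) (fun x hx => hf''' x (hsub_b hx))
      (hint.mono_set hsub_b),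
    integral_sub_pow_three_mul_eq_taylor (fun x hx => hf' x (hsub_a hx))
      (fun x hx => hf'' x (hsub_a hx)) (fun x hx => hf''' x (hsub_a hx))
      (hint.mono_set hsub_a),
    integral_sub (hf.sub intervalIntegrable_const) intervalIntegrable_const,
    integral_sub hf intervalIntegrable_const, intervalIntegral.integral_const,
    intervalIntegral.integral_const, smul_eq_mul, smul_eq_mul,
    ← integral_add_adjacent_intervals (hf.mono_set (uIcc_subset_uIcc left_mem_uIcc hm_mem))
      (hf.mono_set hsub_b), integral_symm m a, hm]
  ring

theorem abs_integral_mul_le_of_rpow_abs_le {m d p q : ℝ} {w φ G : ℝ → ℝ} (hmd : m ≤ d)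
    (hpq : p.HolderConjugate q) (hw : Continuous w) (hφ : IntervalIntegrable φ volume m d)
    (hG : IntervalIntegrable G volume m d) (hφG : ∀ t ∈ Ioc m d, |φ t| ^ q ≤ G t) :
    |∫ t in m..d, w t * φ t|
      ≤ (∫ t in m..d, |w t| ^ p) ^ (1 / p) * (∫ t in m..d, G t) ^ (1 / q) := by
  simp only [integral_of_le hmd]
  have hφ_meas : AEStronglyMeasurable φ (volume.restrict (Ioc m d)) := hφ.1.aestronglyMeasurable
  have hφq : IntegrableOn (fun t => |φ t| ^ q) (Ioc m d) := by
    refine hG.1.mono' (hφ_meas.norm.aemeasurable.pow_const q).aestronglyMeasurable ?_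
    filter_upwards [ae_restrict_mem measurableSet_Ioc] with t ht
    rw [norm_of_nonneg (by positivity)]
    exact hφG t ht
  have hw_Lp : MemLp w (ENNReal.ofReal p) (volume.restrict (Ioc m d)) := by
    refine (integrable_norm_rpow_iff hw.aestronglyMeasurable (by simp [hpq.pos]) (by simp)).1 ?_
    rw [ENNReal.toReal_ofReal hpq.nonneg]
    exact (hw.norm.rpow_const fun _ => Or.inr hpq.nonneg).integrableOn_Ioc
  have hφ_Lq : MemLp φ (ENNReal.ofReal q) (volume.restrict (Ioc m d)) := by
    refine (integrable_norm_rpow_iff hφ_meas (by simp [hpq.symm.pos]) (by simp)).1 ?_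
    simp only [ENNReal.toReal_ofReal hpq.symm.nonneg, Real.norm_eq_abs]
    exact hφq
  calc |∫ t in Ioc m d, w t * φ t|
      ≤ ∫ t in Ioc m d, |w t| * |φ t| := by
        simpa only [Real.norm_eq_abs, norm_mul] using
          norm_integral_le_integral_norm (fun t => w t * φ t)
    _ ≤ (∫ t in Ioc m d, |w t| ^ p) ^ (1 / p) * (∫ t in Ioc m d, |φ t| ^ q) ^ (1 / q) := by
        simpa only [Real.norm_eq_abs] using integral_mul_norm_le_Lp_mul_Lq hpq hw_Lp hφ_Lq
    _ ≤ (∫ t in Ioc m d, |w t| ^ p) ^ (1 / p) * (∫ t in Ioc m d, G t) ^ (1 / q) := by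
        gcongr with t ht
        exacts [one_div_nonneg.2 hpq.symm.nonneg, hG.1, measurableSet_Ioc.nullMeasurableSet,
          hφG t ht]

theorem integral_abs_sub_pow_three_rpow {m d p : ℝ} (hmd : m ≤ d) (hp : 0 ≤ p) :
    ∫ t in m..d, |(d - t) ^ 3| ^ p = (d - m) ^ (3 * p + 1) / (3 * p + 1) := by
  rw [integral_comp_sub_left (fun x => |x ^ 3| ^ p) d, sub_self]
  have hrpow : ∀ x ∈ uIcc 0 (d - m), |x ^ 3| ^ p = x ^ (3 * p) := by
    intro x hx
    rw [uIcc_of_le (sub_nonneg.2 hmd)] at hx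
    rw [abs_of_nonneg (pow_nonneg hx.1 3), ← rpow_natCast, ← rpow_mul hx.1]
    norm_num
  rw [integral_congr hrpow, integral_rpow (Or.inl (by linarith)),
    zero_rpow (by positivity), sub_zero]

theorem integral_exp_mul_sub {m d c : ℝ} (hc : c ≠ 0) :
    ∫ t in m..d, exp (c * (d - t)) = (exp (c * (d - m)) - 1) / c := by
  rw [integral_comp_sub_left (fun x => exp (c * x)) d, sub_self,
    integral_comp_mul_left (fun x => exp x) hc, integral_exp, mul_zero, exp_zero, smul_eq_mul]
  field_simp

theorem rpow_abs_le_mul_exp_of_logConvex {g : ℝ → ℝ} {a b q t : ℝ} (hab : a < b)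
    (hA : 0 < |g a|) (hB : 0 < |g b|)
    (hlog : ∀ α ∈ Icc (0 : ℝ) 1,
      |g (α * a + (1 - α) * b)| ^ q ≤ (|g a| ^ q) ^ α * (|g b| ^ q) ^ (1 - α))
    (ht : t ∈ Icc a b) :
    |g t| ^ q ≤ |g b| ^ q * exp (q * log (|g a| / |g b|) / (b - a) * (b - t)) := by
  have hba : 0 < b - a := by linarith
  have hα : (b - t) / (b - a) ∈ Icc (0 : ℝ) 1 :=
    ⟨div_nonneg (by linarith [ht.2]) hba.le, (div_le_one hba).2 (by linarith [ht.1])⟩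
  have ht_eq : (b - t) / (b - a) * a + (1 - (b - t) / (b - a)) * b = t := by
    field_simp; ring
  refine (ht_eq ▸ hlog _ hα).trans_eq ?_
  rw [rpow_def_of_pos hA, rpow_def_of_pos hB, ← exp_mul, ← exp_mul, ← exp_add, ← exp_add,
    log_div hA.ne' hB.ne']
  congr 1
  field_simp
  ring

theorem two_div_mul_log_mul_rpow_sub_one_pos {K q : ℝ} (hK : 0 < K) (hK1 : K ≠ 1) (hq : 0 < q) :
    0 < 2 / (q * log K) * (K ^ (q / 2) - 1) := by
  rcases hK1.lt_or_gt with h | h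
  · exact mul_pos_of_neg_of_neg
      (div_neg_of_pos_of_neg two_pos (mul_neg_of_pos_of_neg hq (log_neg hK h)))
      (sub_neg.2 (rpow_lt_one hK.le h (by positivity)))
  · exact mul_pos (div_pos two_pos (mul_pos hq (log_pos h)))
      (sub_pos.2 (one_lt_rpow h (by positivity)))

theorem holder_factors_eq_pow_four {h p q B Y : ℝ} (hh : 0 < h) (hpq : p.HolderConjugate q)
    (hB : 0 ≤ B) (hY : 0 ≤ Y) :
    (h ^ (3 * p + 1) / (3 * p + 1)) ^ (1 / p) * (B ^ q * (h * Y)) ^ (1 / q)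
      = h ^ 4 * (1 / (3 * p + 1)) ^ (1 / p) * (B * Y ^ (1 / q)) := by
  have hp := hpq.pos
  have hq := hpq.symm.pos
  have hexp : (3 * p + 1) * (1 / p) + 1 / q = 4 := by
    have := hpq.inv_add_inv_eq_one
    field_simp at this ⊢
    linarith
  rw [div_eq_mul_one_div (h ^ (3 * p + 1)), mul_rpow (by positivity) (by positivity),
    mul_rpow (by positivity) (by positivity), mul_rpow hh.le hY, ← rpow_mul hh.le,
    ← rpow_mul hB, mul_one_div_cancel hq.ne', rpow_one]
  calc h ^ ((3 * p + 1) * (1 / p)) * (1 / (3 * p + 1)) ^ (1 / p) * (B * (h ^ (1 / q) * Y ^ (1 / q)))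
      = h ^ ((3 * p + 1) * (1 / p) + 1 / q) * (1 / (3 * p + 1)) ^ (1 / p) * (B * Y ^ (1 / q)) := by
        rw [rpow_add hh]; ring
    _ = _ := by rw [hexp]; norm_cast

theorem abs_integral_sub_pow_three_mul_le_of_logConvex {g : ℝ → ℝ} {a b p q : ℝ}
    (hab : a < b) (hpq : p.HolderConjugate q) (hg : IntervalIntegrable g volume ((a + b) / 2) b)
    (hA : 0 < |g a|) (hB : 0 < |g b|) (hne : |g a| ≠ |g b|)
    (hlog : ∀ α ∈ Icc (0 : ℝ) 1,
      |g (α * a + (1 - α) * b)| ^ q ≤ (|g a| ^ q) ^ α * (|g b| ^ q) ^ (1 - α)) :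
    |∫ t in (a + b) / 2..b, (b - t) ^ 3 * g t|
      ≤ ((b - a) / 2) ^ 4 * (1 / (3 * p + 1)) ^ (1 / p) *
        (|g b| * (2 / (q * log (|g a| / |g b|)) * ((|g a| / |g b|) ^ (q / 2) - 1)) ^ (1 / q)) := by
  set K := |g a| / |g b| with hK
  set c := q * log K / (b - a) with hc
  have hK_pos : 0 < K := div_pos hA hB
  have hK_ne_one : K ≠ 1 := by rwa [hK, Ne, div_eq_one_iff_eq hB.ne']
  have hlogK : log K ≠ 0 := log_ne_zero_of_pos_of_ne_one hK_pos hK_ne_one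
  have hc_ne : c ≠ 0 := div_ne_zero (mul_ne_zero hpq.symm.ne_zero hlogK) (by linarith)
  have hbound : ∀ t ∈ Ioc ((a + b) / 2) b, |g t| ^ q ≤ |g b| ^ q * exp (c * (b - t)) :=
    fun t ht => rpow_abs_le_mul_exp_of_logConvex hab hA hB hlog
      ⟨by linarith [ht.1], ht.2⟩
  have hholder := abs_integral_mul_le_of_rpow_abs_le (by linarith) hpq
    (by fun_prop : Continuous fun t : ℝ => (b - t) ^ 3) hg
    ((by fun_prop : Continuous fun t => |g b| ^ q * exp (c * (b - t))).intervalIntegrable _ _)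
    hbound
  have hlength : b - (a + b) / 2 = (b - a) / 2 := by ring
  have hexp : exp (c * ((b - a) / 2)) = K ^ (q / 2) := by
    rw [rpow_def_of_pos hK_pos, hc]
    congr 1
    field_simp [(by linarith : b - a ≠ 0)]
  have hY : (K ^ (q / 2) - 1) / c = (b - a) / 2 * (2 / (q * log K) * (K ^ (q / 2) - 1)) := by
    rw [hc]
    field_simp
  rwa [integral_abs_sub_pow_three_rpow (by linarith) hpq.nonneg,
    intervalIntegral.integral_const_mul,
    integral_exp_mul_sub hc_ne, hlength, hexp, hY,
    holder_factors_eq_pow_four (by linarith) hpq hB.le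
      (two_div_mul_log_mul_rpow_sub_one_pos hK_pos hK_ne_one hpq.symm.pos).le] at hholder

theorem abs_integral_sub_pow_three_mul_reflect_le_of_logConvex {g : ℝ → ℝ} {a b p q : ℝ}
    (hab : a < b) (hpq : p.HolderConjugate q) (hg : IntervalIntegrable g volume a ((a + b) / 2))
    (hA : 0 < |g a|) (hB : 0 < |g b|) (hne : |g a| ≠ |g b|)
    (hlog : ∀ α ∈ Icc (0 : ℝ) 1,
      |g (α * a + (1 - α) * b)| ^ q ≤ (|g a| ^ q) ^ α * (|g b| ^ q) ^ (1 - α)) :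
    |∫ t in (a + b) / 2..b, (b - t) ^ 3 * g (a + b - t)|
      ≤ ((b - a) / 2) ^ 4 * (1 / (3 * p + 1)) ^ (1 / p) *
        (|g a| * (2 / (q * log (|g b| / |g a|)) * ((|g b| / |g a|) ^ (q / 2) - 1)) ^ (1 / q)) := by
  have hg_reflect : IntervalIntegrable (fun t => g (a + b - t)) volume ((a + b) / 2) b := by
    have h := hg.comp_sub_left (a + b)
    rw [add_sub_cancel_left, show a + b - (a + b) / 2 = (a + b) / 2 by ring] at h
    exact h.symm
  have hlog_reflect : ∀ α ∈ Icc (0 : ℝ) 1, |g (a + b - (α * a + (1 - α) * b))| ^ q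
      ≤ (|g b| ^ q) ^ α * (|g a| ^ q) ^ (1 - α) := by
    intro α hα
    rw [show a + b - (α * a + (1 - α) * b) = (1 - α) * a + α * b by ring,
      mul_comm ((|g b| ^ q) ^ α)]
    simpa only [sub_sub_cancel] using hlog (1 - α) ⟨by linarith [hα.2], by linarith [hα.1]⟩
  simpa only [add_sub_cancel_left, add_sub_cancel_right] using
    abs_integral_sub_pow_three_mul_le_of_logConvex (g := fun t => g (a + b - t)) hab hpq
      hg_reflect (by simpa using hB) (by simpa using hA) (by simpa using hne.symm)
      (by simpa only [add_sub_cancel_left, add_sub_cancel_right] using hlog_reflect)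

theorem thm_2_2_general
    (I : Set ℝ) (hI : I.OrdConnected)
    (f f' f'' f''' : ℝ → ℝ)
    (a b : ℝ) (ha : a ∈ interior I) (hb : b ∈ interior I) (hab : a < b)
    (hf' : ∀ x ∈ interior I, HasDerivAt f (f' x) x)
    (hf'' : ∀ x ∈ interior I, HasDerivAt f' (f'' x) x)
    (hf''' : ∀ x ∈ interior I, HasDerivAt f'' (f''' x) x)
    (hint : IntegrableOn f''' (Set.Icc a b))
    (p q : ℝ) (hq : 1 < q) (hpq : 1 / p + 1 / q = 1)
    (hlog : ∀ x ∈ Set.Icc a b, ∀ y ∈ Set.Icc a b, ∀ α ∈ Set.Icc (0:ℝ) 1,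
      |f''' (α * x + (1 - α) * y)| ^ q ≤ (|f''' x| ^ q) ^ α * (|f''' y| ^ q) ^ (1 - α))
    (hA : 0 < |f''' a|) (hB : 0 < |f''' b|) (hne : |f''' a| ≠ |f''' b|) :
    |(1 / (b - a)) * ∫ x in a..b, f x - f ((a + b) / 2)
        - ((b - a) ^ 2 / 24) * f'' ((a + b) / 2)|
    ≤ ((b - a) ^ 3 / 96) * (1 / (3 * p + 1)) ^ (1 / p) *
        (|f''' b| * ((2 / (q * Real.log (|f''' a| / |f''' b|))) *
            ((|f''' a| / |f''' b|) ^ (q / 2) - 1)) ^ (1 / q)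
          + |f''' a| * ((2 / (q * Real.log (|f''' b| / |f''' a|))) *
            ((|f''' b| / |f''' a|) ^ (q / 2) - 1)) ^ (1 / q)) := by
  have hpq' : p.HolderConjugate q :=
    (Real.holderConjugate_iff.2 ⟨hq, by simpa only [one_div, add_comm] using hpq⟩).symm
  have hsub : uIcc a b ⊆ interior I := uIcc_of_le hab.le ▸ hI.interior.out ha hb
  have hint' : IntervalIntegrable f''' volume a b :=
    (intervalIntegrable_iff_integrableOn_Icc_of_le hab.le).2 hint
  have hm_mem := add_div_two_mem_uIcc a b
  have hlog_ab := hlog a (left_mem_Icc.2 hab.le) b (right_mem_Icc.2 hab.le)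
  have hright := abs_integral_sub_pow_three_mul_le_of_logConvex hab hpq'
    (hint'.mono_set (uIcc_subset_uIcc hm_mem right_mem_uIcc)) hA hB hne hlog_ab
  have hleft := abs_integral_sub_pow_three_mul_reflect_le_of_logConvex hab hpq'
    (hint'.mono_set (uIcc_subset_uIcc left_mem_uIcc hm_mem)) hA hB hne hlog_ab
  have hid := integral_sub_pow_three_mul_sub_reflect_eq_midpoint_error
    (fun x hx => hf' x (hsub hx)) (fun x hx => hf'' x (hsub hx)) (fun x hx => hf''' x (hsub hx))
    hint'
  have hba : 0 < 6 * (b - a) := by linarith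
  rw [← mul_div_cancel_left₀ (∫ x in a..b, _) (by norm_num : (6 : ℝ) ≠ 0), ← hid,
    one_div_mul_eq_div, div_div, abs_div, abs_of_pos hba, div_le_iff₀ hba]
  exact (abs_sub _ _).trans ((add_le_add hright hleft).trans_eq (by ring))

theorem thm_2_2
    (I : Set ℝ) (hI : I.OrdConnected)
    (f f' f'' f''' : ℝ → ℝ)
    (hfpos : ∀ x ∈ I, 0 ≤ f x)
    (a b : ℝ) (ha : a ∈ interior I) (hb : b ∈ interior I) (hab : a < b)
    (hf' : ∀ x ∈ interior I, HasDerivAt f (f' x) x)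
    (hf'' : ∀ x ∈ interior I, HasDerivAt f' (f'' x) x)
    (hf''' : ∀ x ∈ interior I, HasDerivAt f'' (f''' x) x)
    (hint : IntegrableOn f''' (Set.Icc a b))
    (p q : ℝ) (hq : 1 < q) (hpq : 1 / p + 1 / q = 1)
    (hlog : ∀ x ∈ Set.Icc a b, ∀ y ∈ Set.Icc a b, ∀ α ∈ Set.Icc (0:ℝ) 1,
      |f''' (α * x + (1 - α) * y)| ^ q ≤ (|f''' x| ^ q) ^ α * (|f''' y| ^ q) ^ (1 - α))
    (hA : 0 < |f''' a|) (hB : 0 < |f''' b|) (hne : |f''' a| ≠ |f''' b|) :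
    |(1 / (b - a)) * ∫ x in a..b, f x - f ((a + b) / 2)
        - ((b - a) ^ 2 / 24) * f'' ((a + b) / 2)|
    ≤ ((b - a) ^ 3 / 96) * (1 / (3 * p + 1)) ^ (1 / p) *
        (|f''' b| * ((2 / (q * Real.log (|f''' a| / |f''' b|))) *
            ((|f''' a| / |f''' b|) ^ (q / 2) - 1)) ^ (1 / q)
          + |f''' a| * ((2 / (q * Real.log (|f''' b| / |f''' a|))) *
            ((|f''' b| / |f''' a|) ^ (q / 2) - 1)) ^ (1 / q)) :=
  thm_2_2_general I hI f f' f'' f''' a b ha hb hab hf' hf'' hf''' hint p q hq hpq hlog hA hB hne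
end
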